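/- arXiv:1806.01457 — 3 statements merged into one kernel-verified Lean document; each statement's English description precedes it below -/
import Mathlib

section
/- Let Y₀, Y₁ be integrable random variables, Z a {0,1}-valued random variable, and D₀, D₁ be {0,1}-valued random variables such that the pair (Y₀, Y₁, D₀, D₁) is independent of Z and D₁ ≥ D₀ almost surely (monotonicity). Define D = Z·D₁ + (1−Z)·D₀ and Y = D·Y₁ + (1−D)·Y₀. If 0 < P(Z = 1) < 1 and P(D₁ > D₀) > 0, then (E[Y | Z = 1] − E[Y | Z = 0]) / (E[D | Z = 1] − E[D | Z = 0]) = E[Y₁ − Y₀ | D₁ > D₀]. -/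
/-!
Independence of `Z` from `(Y₀, Y₁, D₀, D₁)` turns the mean of `D` and `Y` on `{Z = z}` into the
unconditional means of `D_z` and of `D_z Y₁ + (1 - D_z) Y₀`. By monotonicity `D₁ - D₀` is the
indicator of the compliers `{D₀ < D₁}`, so the Wald numerator is
`E[(D₁ - D₀)(Y₁ - Y₀)] = E[(Y₁ - Y₀); D₀ < D₁]` and its denominator is `P(D₀ < D₁)`.
-/
open MeasureTheory ProbabilityTheory

namespace ProbabilityTheory

variable {Ω 𝓧 𝓩 : Type*} {mΩ : MeasurableSpace Ω} [MeasurableSpace 𝓧] [MeasurableSpace 𝓩]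
  {μ : Measure Ω}

lemma IndepFun.setIntegral_preimage_div_measureReal_eq_integral_comp
    {X : Ω → 𝓧} {Z : Ω → 𝓩} (hXZ : X ⟂ᵢ[μ] Z) (hX : AEMeasurable X μ) (hZ : Measurable Z)
    {s : Set 𝓩} (hs : MeasurableSet s) (hμs : μ.real (Z ⁻¹' s) ≠ 0)
    {f : 𝓧 → ℝ} (hf : Measurable f) {V : Ω → ℝ} (hV : Set.EqOn V (fun ω => f (X ω)) (Z ⁻¹' s)) :
    (∫ ω in Z ⁻¹' s, V ω ∂μ) / μ.real (Z ⁻¹' s) = ∫ ω, f (X ω) ∂μ := by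
  have hZX : Indep (MeasurableSpace.comap Z ‹_›) (MeasurableSpace.comap X ‹_›) μ :=
    (IndepFun_iff_Indep _ _ _).1 hXZ.symm
  rw [setIntegral_congr_fun (hZ hs) hV,
    hZX.setIntegral_eq_mul hZ.comap_le hX ⟨s, hs, rfl⟩ hf.aestronglyMeasurable,
    mul_div_cancel_left₀ _ hμs]

end ProbabilityTheory

section Switching

variable {Ω : Type*} {mΩ : MeasurableSpace Ω} {μ : Measure Ω} {Y₀ Y₁ d D₀ D₁ : Ω → ℝ}

lemma sub_eq_ite_lt_of_le {a b : ℝ} (ha : a = 0 ∨ a = 1) (hb : b = 0 ∨ b = 1) (hab : a ≤ b) :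
    b - a = if a < b then 1 else 0 := by
  rcases ha with rfl | rfl <;> rcases hb with rfl | rfl <;> norm_num at *

lemma integrable_switching (hd : Measurable d) (hd01 : ∀ ω, d ω = 0 ∨ d ω = 1)
    (hY₀ : Integrable Y₀ μ) (hY₁ : Integrable Y₁ μ) :
    Integrable (fun ω => d ω * Y₁ ω + (1 - d ω) * Y₀ ω) μ := by
  have hbound : ∀ ω, ‖d ω‖ ≤ 1 ∧ ‖1 - d ω‖ ≤ 1 := fun ω => by
    rcases hd01 ω with h | h <;> simp [h]
  exact (hY₁.bdd_mul hd.aestronglyMeasurable (ae_of_all _ fun ω => (hbound ω).1)).add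
    (hY₀.bdd_mul (measurable_const.sub hd).aestronglyMeasurable (ae_of_all _ fun ω => (hbound ω).2))

lemma integral_switching_sub_eq_setIntegral_setOf_lt
    (hD₀ : Measurable D₀) (hD₁ : Measurable D₁)
    (hD₀01 : ∀ ω, D₀ ω = 0 ∨ D₀ ω = 1) (hD₁01 : ∀ ω, D₁ ω = 0 ∨ D₁ ω = 1)
    (hmono : ∀ᵐ ω ∂μ, D₀ ω ≤ D₁ ω) (hY₀ : Integrable Y₀ μ) (hY₁ : Integrable Y₁ μ) :
    ∫ ω, D₁ ω * Y₁ ω + (1 - D₁ ω) * Y₀ ω ∂μ - ∫ ω, D₀ ω * Y₁ ω + (1 - D₀ ω) * Y₀ ω ∂μ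
      = ∫ ω in {ω | D₀ ω < D₁ ω}, Y₁ ω - Y₀ ω ∂μ := by
  rw [← integral_sub (integrable_switching hD₁ hD₁01 hY₀ hY₁)
      (integrable_switching hD₀ hD₀01 hY₀ hY₁),
    ← integral_indicator (measurableSet_lt hD₀ hD₁)]
  refine integral_congr_ae ?_
  filter_upwards [hmono] with ω hω
  calc D₁ ω * Y₁ ω + (1 - D₁ ω) * Y₀ ω - (D₀ ω * Y₁ ω + (1 - D₀ ω) * Y₀ ω)
      = (D₁ ω - D₀ ω) * (Y₁ ω - Y₀ ω) := by ring
    _ = _ := by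
      rw [sub_eq_ite_lt_of_le (hD₀01 ω) (hD₁01 ω) hω]
      by_cases h : D₀ ω < D₁ ω <;> simp [h]

lemma integral_sub_eq_measureReal_setOf_lt [IsFiniteMeasure μ]
    (hD₀ : Measurable D₀) (hD₁ : Measurable D₁)
    (hD₀01 : ∀ ω, D₀ ω = 0 ∨ D₀ ω = 1) (hD₁01 : ∀ ω, D₁ ω = 0 ∨ D₁ ω = 1)
    (hmono : ∀ᵐ ω ∂μ, D₀ ω ≤ D₁ ω) :
    ∫ ω, D₁ ω ∂μ - ∫ ω, D₀ ω ∂μ = μ.real {ω | D₀ ω < D₁ ω} := by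
  simpa using integral_switching_sub_eq_setIntegral_setOf_lt (Y₀ := 0) (Y₁ := 1)
    hD₀ hD₁ hD₀01 hD₁01 hmono (integrable_zero _ _ μ) (integrable_const 1)

end Switching

theorem late_theorem_general
    {Ω : Type*} [MeasurableSpace Ω] (μ : Measure Ω) [IsProbabilityMeasure μ]
    (Y0 Y1 D0 D1 Z D Y : Ω → ℝ)
    (hZmeas : Measurable Z) (hD0meas : Measurable D0) (hD1meas : Measurable D1)
    (hZ01 : ∀ ω, Z ω = 0 ∨ Z ω = 1)
    (hD0bin : ∀ ω, D0 ω = 0 ∨ D0 ω = 1) (hD1bin : ∀ ω, D1 ω = 0 ∨ D1 ω = 1)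
    (hY0 : Integrable Y0 μ) (hY1 : Integrable Y1 μ)
    (hindep : IndepFun (fun ω => (Y0 ω, Y1 ω, D0 ω, D1 ω)) Z μ)
    (hmono : ∀ᵐ ω ∂μ, D0 ω ≤ D1 ω)
    (hDdef : ∀ ω, D ω = Z ω * D1 ω + (1 - Z ω) * D0 ω)
    (hYdef : ∀ ω, Y ω = D ω * Y1 ω + (1 - D ω) * Y0 ω)
    (h1 : 0 < μ {ω | Z ω = 1}) (h2 : μ {ω | Z ω = 1} < 1) :
    ((∫ ω in {ω | Z ω = 1}, Y ω ∂μ) / (μ {ω | Z ω = 1}).toReal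
      - (∫ ω in {ω | Z ω = 0}, Y ω ∂μ) / (μ {ω | Z ω = 0}).toReal)
    / ((∫ ω in {ω | Z ω = 1}, D ω ∂μ) / (μ {ω | Z ω = 1}).toReal
      - (∫ ω in {ω | Z ω = 0}, D ω ∂μ) / (μ {ω | Z ω = 0}).toReal)
    = (∫ ω in {ω | D0 ω < D1 ω}, (Y1 ω - Y0 ω) ∂μ) / (μ {ω | D0 ω < D1 ω}).toReal := by
  have hA : MeasurableSet {ω | Z ω = 1} := hZmeas (measurableSet_singleton 1)
  have hZ0 : {ω | Z ω = 0} = {ω | Z ω = 1}ᶜ := by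
    ext ω; rcases hZ01 ω with h | h <;> simp [h]
  have hμ1 : μ.real {ω | Z ω = 1} ≠ 0 := (measureReal_ne_zero_iff).2 h1.ne'
  have hμ0 : μ.real {ω | Z ω = 0} ≠ 0 := by
    refine (measureReal_ne_zero_iff).2 ?_
    rw [hZ0, prob_compl_eq_one_sub hA]
    exact (tsub_pos_of_lt h2).ne'
  have hD_on : ∀ c, ∀ ω, Z ω = c → D ω = c * D1 ω + (1 - c) * D0 ω := fun c ω h => h ▸ hDdef ω
  have hX : AEMeasurable (fun ω => (Y0 ω, Y1 ω, D0 ω, D1 ω)) μ := by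
    have := hY0.aemeasurable; have := hY1.aemeasurable; fun_prop
  have cond_mean (c : ℝ) :=
    hindep.setIntegral_preimage_div_measureReal_eq_integral_comp hX hZmeas
      (measurableSet_singleton c)
  have eY1 : (∫ ω in {ω | Z ω = 1}, Y ω ∂μ) / μ.real {ω | Z ω = 1}
      = ∫ ω, D1 ω * Y1 ω + (1 - D1 ω) * Y0 ω ∂μ :=
    cond_mean 1 hμ1 (f := fun x => x.2.2.2 * x.2.1 + (1 - x.2.2.2) * x.1) (by fun_prop)
      fun ω h => by simp [hYdef, hD_on 1 ω h]
  have eY0 : (∫ ω in {ω | Z ω = 0}, Y ω ∂μ) / μ.real {ω | Z ω = 0}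
      = ∫ ω, D0 ω * Y1 ω + (1 - D0 ω) * Y0 ω ∂μ :=
    cond_mean 0 hμ0 (f := fun x => x.2.2.1 * x.2.1 + (1 - x.2.2.1) * x.1) (by fun_prop)
      fun ω h => by simp [hYdef, hD_on 0 ω h]
  have eD1 : (∫ ω in {ω | Z ω = 1}, D ω ∂μ) / μ.real {ω | Z ω = 1} = ∫ ω, D1 ω ∂μ :=
    cond_mean 1 hμ1 (f := fun x => x.2.2.2) (by fun_prop) fun ω h => by simp [hD_on 1 ω h]
  have eD0 : (∫ ω in {ω | Z ω = 0}, D ω ∂μ) / μ.real {ω | Z ω = 0} = ∫ ω, D0 ω ∂μ :=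
    cond_mean 0 hμ0 (f := fun x => x.2.2.1) (by fun_prop) fun ω h => by simp [hD_on 0 ω h]
  simp only [← measureReal_def]
  rw [eY1, eY0, eD1, eD0,
    integral_switching_sub_eq_setIntegral_setOf_lt hD0meas hD1meas hD0bin hD1bin hmono hY0 hY1,
    integral_sub_eq_measureReal_setOf_lt hD0meas hD1meas hD0bin hD1bin hmono]

theorem late_theorem
    {Ω : Type*} [MeasurableSpace Ω] (μ : Measure Ω) [IsProbabilityMeasure μ]
    (Y0 Y1 D0 D1 Z D Y : Ω → ℝ)
    (hZmeas : Measurable Z) (hD0meas : Measurable D0) (hD1meas : Measurable D1)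
    (hZ01 : ∀ ω, Z ω = 0 ∨ Z ω = 1)
    (hD0bin : ∀ ω, D0 ω = 0 ∨ D0 ω = 1) (hD1bin : ∀ ω, D1 ω = 0 ∨ D1 ω = 1)
    (hY0 : Integrable Y0 μ) (hY1 : Integrable Y1 μ)
    (hindep : IndepFun (fun ω => (Y0 ω, Y1 ω, D0 ω, D1 ω)) Z μ)
    (hmono : ∀ᵐ ω ∂μ, D0 ω ≤ D1 ω)
    (hDdef : ∀ ω, D ω = Z ω * D1 ω + (1 - Z ω) * D0 ω)
    (hYdef : ∀ ω, Y ω = D ω * Y1 ω + (1 - D ω) * Y0 ω)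
    (h1 : 0 < μ {ω | Z ω = 1}) (h2 : μ {ω | Z ω = 1} < 1)
    (hcompl : 0 < μ {ω | D0 ω < D1 ω}) :
    ((∫ ω in {ω | Z ω = 1}, Y ω ∂μ) / (μ {ω | Z ω = 1}).toReal
      - (∫ ω in {ω | Z ω = 0}, Y ω ∂μ) / (μ {ω | Z ω = 0}).toReal)
    / ((∫ ω in {ω | Z ω = 1}, D ω ∂μ) / (μ {ω | Z ω = 1}).toReal
      - (∫ ω in {ω | Z ω = 0}, D ω ∂μ) / (μ {ω | Z ω = 0}).toReal)
    = (∫ ω in {ω | D0 ω < D1 ω}, (Y1 ω - Y0 ω) ∂μ) / (μ {ω | D0 ω < D1 ω}).toReal :=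
  late_theorem_general μ Y0 Y1 D0 D1 Z D Y hZmeas hD0meas hD1meas hZ01 hD0bin hD1bin hY0 hY1 hindep
    hmono hDdef hYdef h1 h2
end

section
/- Under the assumptions of the LATE theorem (independence of (Y₀,Y₁,D₀,D₁) from binary Z, monotonicity D₁ ≥ D₀ a.s., D = Z·D₁+(1−Z)·D₀), E[D | Z = 1] − E[D | Z = 0] = P(D₁ > D₀), i.e., the first-stage effect equals the proportion of compliers. -/
/-!
On `{Z = 1}` the treatment is `D = D₁` and on `{Z = 0}` it is `D = D₀`. Since `Z` is independent
of `D₀` and `D₁`, conditioning on either event leaves their means unchanged, so the first stage is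
`E[D₁] - E[D₀] = E[D₁ - D₀]`. Monotonicity and binarity make `D₁ - D₀` the indicator of the
compliers `{D₀ < D₁}` almost surely.
-/

open MeasureTheory ProbabilityTheory

section

variable {Ω β : Type*} [MeasurableSpace Ω] [MeasurableSpace β] {μ : Measure Ω}

lemma ProbabilityTheory.IndepFun.setIntegral_preimage_div_measureReal [IsFiniteMeasure μ]
    {X : Ω → ℝ} {Z : Ω → β} (hXZ : IndepFun X Z μ) (hX : AEMeasurable X μ) (hZ : Measurable Z)
    {s : Set β} (hs : MeasurableSet s) (hs0 : μ (Z ⁻¹' s) ≠ 0) :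
    (∫ ω in Z ⁻¹' s, X ω ∂μ) / μ.real (Z ⁻¹' s) = ∫ ω, X ω ∂μ := by
  have hZX : Indep (MeasurableSpace.comap Z inferInstance)
      (MeasurableSpace.comap X inferInstance) μ :=
    (IndepFun_iff_Indep Z X μ).mp hXZ.symm
  have hmul : ∫ ω in Z ⁻¹' s, X ω ∂μ = μ.real (Z ⁻¹' s) * ∫ ω, X ω ∂μ :=
    hZX.setIntegral_eq_mul (f := id) hZ.comap_le hX ⟨s, hs, rfl⟩ aestronglyMeasurable_id
  rw [hmul, mul_div_cancel_left₀ _ ((measureReal_ne_zero_iff (measure_ne_top μ _)).mpr hs0)]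

lemma integrable_of_zero_or_one [IsFiniteMeasure μ] {f : Ω → ℝ} (hf : Measurable f)
    (hf01 : ∀ ω, f ω = 0 ∨ f ω = 1) : Integrable f μ :=
  .of_bound hf.aestronglyMeasurable 1 <| ae_of_all _ fun ω => by
    rcases hf01 ω with h | h <;> simp [h]

lemma integral_sub_eq_measureReal_lt_of_zero_or_one [IsFiniteMeasure μ] {f g : Ω → ℝ}
    (hf : Measurable f) (hg : Measurable g) (hf01 : ∀ ω, f ω = 0 ∨ f ω = 1)
    (hg01 : ∀ ω, g ω = 0 ∨ g ω = 1) (hfg : f ≤ᵐ[μ] g) :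
    ∫ ω, g ω ∂μ - ∫ ω, f ω ∂μ = μ.real {ω | f ω < g ω} := by
  have hdiff : (fun ω => g ω - f ω) =ᵐ[μ] {ω | f ω < g ω}.indicator 1 := by
    filter_upwards [hfg] with ω hω
    simp only [Set.indicator_apply, Set.mem_ofPred_eq, Pi.one_apply]
    grind [hf01 ω, hg01 ω]
  rw [← integral_sub (integrable_of_zero_or_one hg hg01) (integrable_of_zero_or_one hf hf01),
    integral_congr_ae hdiff, integral_indicator_one (measurableSet_lt hf hg)]

end

theorem first_stage_eq_complier_share
    {Ω : Type*} [MeasurableSpace Ω] (μ : Measure Ω) [IsProbabilityMeasure μ]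
    (Y0 Y1 D0 D1 Z D : Ω → ℝ)
    (hZmeas : Measurable Z) (hD0meas : Measurable D0) (hD1meas : Measurable D1)
    (hZ01 : ∀ ω, Z ω = 0 ∨ Z ω = 1)
    (hD0bin : ∀ ω, D0 ω = 0 ∨ D0 ω = 1) (hD1bin : ∀ ω, D1 ω = 0 ∨ D1 ω = 1)
    (hindep : IndepFun (fun ω => (Y0 ω, Y1 ω, D0 ω, D1 ω)) Z μ)
    (hmono : ∀ᵐ ω ∂μ, D0 ω ≤ D1 ω)
    (hDdef : ∀ ω, D ω = Z ω * D1 ω + (1 - Z ω) * D0 ω)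
    (h1 : 0 < μ {ω | Z ω = 1}) (h2 : μ {ω | Z ω = 1} < 1) :
    (∫ ω in {ω | Z ω = 1}, D ω ∂μ) / (μ {ω | Z ω = 1}).toReal
      - (∫ ω in {ω | Z ω = 0}, D ω ∂μ) / (μ {ω | Z ω = 0}).toReal
    = (μ {ω | D0 ω < D1 ω}).toReal := by
  have hD1Z : IndepFun D1 Z μ :=
    hindep.comp (measurable_snd.comp (measurable_snd.comp measurable_snd)) measurable_id
  have hD0Z : IndepFun D0 Z μ :=
    hindep.comp (measurable_fst.comp (measurable_snd.comp measurable_snd)) measurable_id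
  have hZ0 : μ {ω | Z ω = 0} ≠ 0 := by
    have : {ω | Z ω = 0} = {ω | Z ω = 1}ᶜ := by
      ext ω; rcases hZ01 ω with h | h <;> simp [h]
    rw [this, prob_compl_eq_one_sub (s := {ω | Z ω = 1}) (hZmeas (measurableSet_singleton 1))]
    exact (tsub_pos_of_lt h2).ne'
  have hmean (z : ℝ) (X : Ω → ℝ) (hX : Measurable X) (hXZ : IndepFun X Z μ)
      (hz : μ {ω | Z ω = z} ≠ 0) (hDX : ∀ ω, Z ω = z → D ω = X ω) :
      (∫ ω in {ω | Z ω = z}, D ω ∂μ) / (μ {ω | Z ω = z}).toReal = ∫ ω, X ω ∂μ := by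
    rw [setIntegral_congr_fun (s := {ω | Z ω = z}) (hZmeas (measurableSet_singleton z)) hDX]
    exact hXZ.setIntegral_preimage_div_measureReal hX.aemeasurable hZmeas
      (measurableSet_singleton z) hz
  rw [hmean 1 D1 hD1meas hD1Z h1.ne' fun ω hω => by rw [hDdef, hω]; ring,
    hmean 0 D0 hD0meas hD0Z hZ0 fun ω hω => by rw [hDdef, hω]; ring]
  exact integral_sub_eq_measureReal_lt_of_zero_or_one hD0meas hD1meas hD0bin hD1bin hmono
end

section
/- Under the assumptions of the LATE theorem (independence, monotonicity, D = Z·D₁+(1−Z)·D₀, Y = D·Y₁+(1−D)·Y₀, binary Z with 0 < P(Z=1) < 1), E[Y | Z = 1] − E[Y | Z = 0] = E[(Y₁ − Y₀) · 1{D₁ > D₀}]. -/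
/-!
On `{Z = z}` the observed outcome is `D_z Y₁ + (1 - D_z) Y₀`, a function of `(Y₀, Y₁, D₀, D₁)` and
hence independent of `Z`; so the mean of `Y` given `Z = z` is the unconditional mean of that
function. The difference of the two arms is `E[(D₁ - D₀)(Y₁ - Y₀)]`, and for binary `D₀ ≤ D₁`
the factor `D₁ - D₀` is exactly the complier indicator `1{D₀ < D₁}`.
-/

open MeasureTheory ProbabilityTheory

namespace ProbabilityTheory

variable {Ω 𝓧 β : Type*} [MeasurableSpace Ω] [MeasurableSpace 𝓧] [MeasurableSpace β]
  {μ : Measure Ω}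

lemma IndepFun.setIntegral_preimage_div_eq_integral [IsFiniteMeasure μ] {X : Ω → 𝓧} {Z : Ω → β}
    (hXZ : IndepFun X Z μ) (hX : AEMeasurable X μ) (hZ : Measurable Z) {s : Set β}
    (hs : MeasurableSet s) (hμs : μ (Z ⁻¹' s) ≠ 0) {f : 𝓧 → ℝ}
    (hf : AEStronglyMeasurable f (μ.map X)) :
    (∫ ω in Z ⁻¹' s, f (X ω) ∂μ) / μ.real (Z ⁻¹' s) = ∫ ω, f (X ω) ∂μ := by
  have hindep := (IndepFun_iff_Indep Z X μ).1 hXZ.symm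
  rw [hindep.setIntegral_eq_mul hZ.comap_le hX ⟨s, hs, rfl⟩ hf,
    mul_div_cancel_left₀ _ ((measureReal_ne_zero_iff (measure_ne_top μ _)).2 hμs)]

lemma setIntegral_div_eq_integral_of_indepFun [IsFiniteMeasure μ] {Y0 Y1 Dz Z Y : Ω → ℝ} {z : ℝ}
    (hind : IndepFun (fun ω => (Y0 ω, Y1 ω, Dz ω)) Z μ) (hY0 : AEMeasurable Y0 μ)
    (hY1 : AEMeasurable Y1 μ) (hDz : AEMeasurable Dz μ) (hZ : Measurable Z)
    (hz : μ {ω | Z ω = z} ≠ 0) (hY : ∀ ω, Z ω = z → Y ω = Dz ω * Y1 ω + (1 - Dz ω) * Y0 ω) :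
    (∫ ω in {ω | Z ω = z}, Y ω ∂μ) / μ.real {ω | Z ω = z}
      = ∫ ω, Dz ω * Y1 ω + (1 - Dz ω) * Y0 ω ∂μ := by
  have hs : MeasurableSet {ω | Z ω = z} := hZ (measurableSet_singleton z)
  rw [setIntegral_congr_fun hs hY]
  exact hind.setIntegral_preimage_div_eq_integral (hY0.prodMk (hY1.prodMk hDz)) hZ
    (measurableSet_singleton z) hz (f := fun x => x.2.2 * x.2.1 + (1 - x.2.2) * x.1)
    (by fun_prop : Measurable _).aestronglyMeasurable

end ProbabilityTheory

namespace MeasureTheory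

variable {Ω : Type*} [MeasurableSpace Ω] {μ : Measure Ω}

lemma Integrable.mul_add_one_sub_mul {D Y1 Y0 : Ω → ℝ} (hY1 : Integrable Y1 μ)
    (hY0 : Integrable Y0 μ) (hD : AEStronglyMeasurable D μ)
    (hD01 : ∀ᵐ ω ∂μ, D ω ∈ Set.Icc 0 1) :
    Integrable (fun ω => D ω * Y1 ω + (1 - D ω) * Y0 ω) μ := by
  refine (hY1.bdd_mul hD (c := 1) ?_).add
    (hY0.bdd_mul (aestronglyMeasurable_const.sub hD) (c := 1) ?_)
  all_goals
    filter_upwards [hD01] with ω ⟨h0, h1⟩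
    rw [Real.norm_eq_abs, abs_le]
    constructor <;> linarith

end MeasureTheory

lemma indicator_setOf_lt_eq_sub {α : Type*} {f g : α → ℝ} {a : α} (hf : f a = 0 ∨ f a = 1)
    (hg : g a = 0 ∨ g a = 1) (hfg : f a ≤ g a) :
    {x | f x < g x}.indicator 1 a = g a - f a := by
  simp only [Set.indicator_apply, Set.mem_ofPred_eq, Pi.one_apply]
  split_ifs <;> grind

theorem reduced_form_loads_on_compliers
    {Ω : Type*} [MeasurableSpace Ω] (μ : Measure Ω) [IsProbabilityMeasure μ]
    (Y0 Y1 D0 D1 Z D Y : Ω → ℝ)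
    (hZmeas : Measurable Z) (hD0meas : Measurable D0) (hD1meas : Measurable D1)
    (hZ01 : ∀ ω, Z ω = 0 ∨ Z ω = 1)
    (hD0bin : ∀ ω, D0 ω = 0 ∨ D0 ω = 1) (hD1bin : ∀ ω, D1 ω = 0 ∨ D1 ω = 1)
    (hY0 : Integrable Y0 μ) (hY1 : Integrable Y1 μ)
    (hindep : IndepFun (fun ω => (Y0 ω, Y1 ω, D0 ω, D1 ω)) Z μ)
    (hmono : ∀ᵐ ω ∂μ, D0 ω ≤ D1 ω)
    (hDdef : ∀ ω, D ω = Z ω * D1 ω + (1 - Z ω) * D0 ω)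
    (hYdef : ∀ ω, Y ω = D ω * Y1 ω + (1 - D ω) * Y0 ω)
    (h1 : 0 < μ {ω | Z ω = 1}) (h2 : μ {ω | Z ω = 1} < 1) :
    (∫ ω in {ω | Z ω = 1}, Y ω ∂μ) / (μ {ω | Z ω = 1}).toReal
      - (∫ ω in {ω | Z ω = 0}, Y ω ∂μ) / (μ {ω | Z ω = 0}).toReal
    = ∫ ω, (Y1 ω - Y0 ω) * Set.indicator {ω | D0 ω < D1 ω} 1 ω ∂μ := by
  have ae_mem_Icc : ∀ {d : Ω → ℝ}, (∀ ω, d ω = 0 ∨ d ω = 1) → ∀ᵐ ω ∂μ, d ω ∈ Set.Icc 0 1 :=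
    fun hd => ae_of_all _ fun ω => by rcases hd ω with h | h <;> simp [h]
  have hZ0 : {ω | Z ω = 0} = {ω | Z ω = 1}ᶜ := by
    ext ω; rcases hZ01 ω with h | h <;> simp [h]
  have hμZ0 : μ {ω | Z ω = 0} ≠ 0 := by
    have hs : MeasurableSet {ω | Z ω = 1} := hZmeas (measurableSet_singleton 1)
    rw [hZ0, prob_compl_eq_one_sub hs]
    exact (tsub_pos_of_lt h2).ne'
  have hind1 : IndepFun (fun ω => (Y0 ω, Y1 ω, D1 ω)) Z μ :=
    hindep.comp (φ := fun x => (x.1, x.2.1, x.2.2.2)) (by fun_prop) measurable_id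
  have hind0 : IndepFun (fun ω => (Y0 ω, Y1 ω, D0 ω)) Z μ :=
    hindep.comp (φ := fun x => (x.1, x.2.1, x.2.2.1)) (by fun_prop) measurable_id
  have arm1 := setIntegral_div_eq_integral_of_indepFun (Y := Y) hind1 hY0.aemeasurable
    hY1.aemeasurable hD1meas.aemeasurable hZmeas h1.ne' fun ω hω => by simp [hYdef, hDdef, hω]
  have arm0 := setIntegral_div_eq_integral_of_indepFun (Y := Y) hind0 hY0.aemeasurable
    hY1.aemeasurable hD0meas.aemeasurable hZmeas hμZ0 fun ω hω => by simp [hYdef, hDdef, hω]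
  rw [← measureReal_def, ← measureReal_def, arm1, arm0, ← integral_sub
    (hY1.mul_add_one_sub_mul hY0 hD1meas.aestronglyMeasurable (ae_mem_Icc hD1bin))
    (hY1.mul_add_one_sub_mul hY0 hD0meas.aestronglyMeasurable (ae_mem_Icc hD0bin))]
  refine integral_congr_ae ?_
  filter_upwards [hmono] with ω hle
  rw [indicator_setOf_lt_eq_sub (hD0bin ω) (hD1bin ω) hle]
  ring
end
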